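/- Let (E,T) be an output stable pair with E ∈ L(X,Y), T ∈ L(X), let S ∈ S(U,Y), and define N ∈ L(X,U) by N = Σ_{j≥0} S_j* E T^j (where S(z) = Σ_j S_j z^j), equivalently via N* = O_{E,T}* M_S|_U. Then for every x ∈ X the data set {S, T, E, N, x} is AIP-admissible; in particular M_{F^S} = (I − M_S M_S*) O_{E,T} maps X into H(K_S), P := M_{F^S}^{[*]} M_{F^S} = O_{E,T}* O_{E,T} − O_{N,T}* O_{N,T} satisfies the Stein equation P − T*PT = E*E − N*N, and M_{F^S}^{[*]} = O_{E,T}*|_{H(K_S)}, so that the interpolation condition M_{F^S}^{[*]} f = x coincides with the left-tangential operator-argument condition (E* f)^{∧L}(T*) = x. -/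

import Mathlib

open ContinuousLinearMap Metric
open scoped InnerProductSpace ComplexOrder

noncomputable section

/-- The operator-valued Schur class on the unit disk. -/
def IsSchur {U Y : Type*}
    [NormedAddCommGroup U] [NormedSpace ℂ U]
    [NormedAddCommGroup Y] [NormedSpace ℂ Y]
    (S : ℂ → (U →L[ℂ] Y)) : Prop :=
  AnalyticOnNhd ℂ S (ball (0:ℂ) 1) ∧ ∀ z ∈ ball (0:ℂ) 1, ‖S z‖ ≤ 1

/-- The Hardy space `H²_Y`, realized as `ℓ²(ℕ, Y)` via Taylor coefficients. -/
abbrev H2 (Y : Type*) [NormedAddCommGroup Y] [InnerProductSpace ℂ Y] : Type _ :=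
  lp (fun _ : ℕ => Y) 2

/-- Evaluation of an `H²`-element (given by its Taylor coefficients) at `z ∈ D`. -/
def hardyEval {Y : Type*} [NormedAddCommGroup Y] [InnerProductSpace ℂ Y]
    [CompleteSpace Y] (f : H2 Y) (z : ℂ) : Y :=
  ∑' n : ℕ, z ^ n • f n

/-!
Comparing Taylor coefficients (which power series determine uniquely) gives
`M_S (zⁿ u) = zⁿ S(z) u`, hence the `n`-th coefficient of `M_S* O_{E,T} x` is
`Σ_j S_j* E T^{j+n} x = N Tⁿ x`, i.e. `M_S* O_{E,T} = O_{N,T}`.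
Since `ι ι^{[*]} = I − M_S M_S*` and `ι` is injective, `M_{F^S} = ι^{[*]} O_{E,T}`, so
`M_{F^S}^{[*]} = O_{E,T}* ι` and
`P = O_{E,T}* (I − M_S M_S*) O_{E,T} = O_{E,T}* O_{E,T} − O_{N,T}* O_{N,T}`.
Every observability operator satisfies `O* O − T* O* O T = F* F` (drop the first term of
`Σ_n T*ⁿ F* F Tⁿ`); subtracting the instances for `(E,T)` and `(N,T)` gives the Stein equation.
-/

open Filter Topology in
theorem eq_zero_of_eventually_hasSum_pow_smul_zero {𝕜 E : Type*} [NontriviallyNormedField 𝕜]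
    [NormedAddCommGroup E] [NormedSpace 𝕜 E] {a : ℕ → E}
    (h : ∀ᶠ z in 𝓝 (0 : 𝕜), HasSum (fun n => z ^ n • a n) 0) : a = 0 := by
  obtain ⟨ε, hε, hball⟩ := Metric.eventually_nhds_iff_ball.mp h
  obtain ⟨z₀, hz₀, hz₀ε⟩ := NormedField.exists_norm_lt 𝕜 hε
  let p : FormalMultilinearSeries 𝕜 𝕜 E := fun n =>
    ContinuousMultilinearMap.mkPiRing 𝕜 (Fin n) (a n)
  have hp : ∀ n y, p n (fun _ => y) = y ^ n • a n := by simp [p]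
  have hradius : (‖z₀‖₊ : ENNReal) ≤ p.radius := by
    refine p.le_radius_of_tendsto (l := 0) ?_
    simpa [p, ContinuousMultilinearMap.norm_mkPiRing, norm_smul, mul_comm] using
      (hball z₀ (mem_ball_zero_iff.mpr hz₀ε)).summable.tendsto_atTop_zero.norm
  have hseries : HasFPowerSeriesOnBall 0 p 0 ‖z₀‖₊ :=
    { r_le := hradius
      r_pos := by simpa using hz₀
      hasSum := fun {y} hy => by
        simp only [hp, Pi.zero_apply]
        exact hball y (mem_ball_zero_iff.mpr ((by simpa using hy : ‖y‖ < ‖z₀‖).trans hz₀ε)) }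
  funext n
  exact (ContinuousMultilinearMap.mkPiRing_eq_zero_iff _).mp
    (congrFun hseries.hasFPowerSeriesAt.eq_zero n)

theorem HasSum.pow_smul_shift {𝕜 E : Type*} [CommMonoid 𝕜] [AddCommMonoid E] [TopologicalSpace E]
    [DistribMulAction 𝕜 E] [ContinuousConstSMul 𝕜 E] {b : ℕ → E} {z : 𝕜} {s : E}
    (h : HasSum (fun j => z ^ j • b j) s) (n : ℕ) :
    HasSum (fun k => z ^ k • if n ≤ k then b (k - n) else 0) (z ^ n • s) := by
  rw [← (add_left_injective n).hasSum_iff]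
  · convert h.const_smul (z ^ n) using 1
    funext j
    simp [pow_add, mul_comm (z ^ j), mul_smul]
  · intro k hk
    have hkn : ¬ n ≤ k := fun hle => hk ⟨k - n, Nat.sub_add_cancel hle⟩
    simp [hkn]

section HardySpace

variable {X U Y : Type*} [NormedAddCommGroup X] [InnerProductSpace ℂ X]
  [NormedAddCommGroup U] [InnerProductSpace ℂ U] [CompleteSpace U]
  [NormedAddCommGroup Y] [InnerProductSpace ℂ Y] [CompleteSpace Y]

theorem hasSum_hardyEval (f : H2 Y) {z : ℂ} (hz : ‖z‖ < 1) :
    HasSum (fun m => z ^ m • f m) (hardyEval f z) := by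
  refine Summable.hasSum (Summable.of_norm_bounded
    ((summable_geometric_of_lt_one (norm_nonneg z) hz).mul_left ‖f‖) fun m => ?_)
  rw [norm_smul, norm_pow, mul_comm]
  exact mul_le_mul_of_nonneg_right (lp.norm_apply_le_norm two_ne_zero f m) (by positivity)

theorem hardyEval_single (n : ℕ) (y : Y) (z : ℂ) :
    hardyEval (lp.single 2 n y) z = z ^ n • y := by
  rw [hardyEval, tsum_eq_single n fun m hm => by simp [hm]]
  simp

variable {S : ℂ → U →L[ℂ] Y} {Scoef : ℕ → U →L[ℂ] Y} {MS : H2 U →L[ℂ] H2 Y}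

theorem multiplier_single_apply
    (hScoef : ∀ z ∈ ball (0:ℂ) 1, ∀ u : U, HasSum (fun n => z ^ n • Scoef n u) (S z u))
    (hMS : ∀ f : H2 U, ∀ z ∈ ball (0:ℂ) 1, hardyEval (MS f) z = S z (hardyEval f z))
    (n : ℕ) (u : U) (m : ℕ) :
    MS (lp.single 2 n u) m = if n ≤ m then Scoef (m - n) u else 0 := by
  suffices h : (fun k => MS (lp.single 2 n u) k - if n ≤ k then Scoef (k - n) u else 0) = 0 from
    sub_eq_zero.mp (congrFun h m)
  refine eq_zero_of_eventually_hasSum_pow_smul_zero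
    (Filter.mem_of_superset (ball_mem_nhds (0 : ℂ) one_pos) fun z hz => ?_)
  have hcoeff := hasSum_hardyEval (MS (lp.single 2 n u)) (mem_ball_zero_iff.mp hz)
  rw [hMS _ z hz, hardyEval_single, map_smul] at hcoeff
  simpa [smul_sub] using hcoeff.sub ((hScoef z hz u).pow_smul_shift n)

theorem adjoint_comp_observability_apply {T : X →L[ℂ] X} {E : X →L[ℂ] Y} {OET : X →L[ℂ] H2 Y}
    (hOET : ∀ (x : X) (n : ℕ), OET x n = E ((T ^ n) x))
    (hScoef : ∀ z ∈ ball (0:ℂ) 1, ∀ u : U, HasSum (fun n => z ^ n • Scoef n u) (S z u))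
    (hMS : ∀ f : H2 U, ∀ z ∈ ball (0:ℂ) 1, hardyEval (MS f) z = S z (hardyEval f z))
    {N : X →L[ℂ] U} (hN : ∀ x : X, HasSum (fun j => adjoint (Scoef j) (E ((T ^ j) x))) (N x))
    (x : X) (n : ℕ) :
    (adjoint MS ∘L OET) x n = N ((T ^ n) x) := by
  refine ext_inner_left ℂ fun u => ?_
  have hsum := lp.hasSum_inner (𝕜 := ℂ) (MS (lp.single 2 n u)) (OET x)
  rw [← (add_left_injective n).hasSum_iff fun k hk => ?_] at hsum
  · rw [comp_apply, ← lp.inner_single_left (G := fun _ : ℕ => U), adjoint_inner_right]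
    refine hsum.unique ?_
    simpa only [Function.comp_def, multiplier_single_apply hScoef hMS, Nat.le_add_left,
      if_true, Nat.add_sub_cancel, hOET, pow_add, mul_apply_eq_comp, innerSL_apply_apply,
      adjoint_inner_right] using (innerSL ℂ u).hasSum (hN ((T ^ n) x))
  · have hkn : ¬ n ≤ k := fun hle => hk ⟨k - n, Nat.sub_add_cancel hle⟩
    rw [multiplier_single_apply hScoef hMS, if_neg hkn, inner_zero_left]

theorem observability_stein [CompleteSpace X] {T : X →L[ℂ] X} {F : X →L[ℂ] Y} {O : X →L[ℂ] H2 Y}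
    (hO : ∀ (x : X) (n : ℕ), O x n = F ((T ^ n) x)) :
    adjoint O ∘L O - adjoint T ∘L (adjoint O ∘L O) ∘L T = adjoint F ∘L F := by
  ext x
  refine ext_inner_left ℂ fun v => ?_
  simp only [sub_apply, comp_apply, inner_sub_right, adjoint_inner_right]
  have hshift := (hasSum_nat_add_iff' 1).mpr (lp.hasSum_inner (𝕜 := ℂ) (O v) (O x))
  have hT := lp.hasSum_inner (𝕜 := ℂ) (O (T v)) (O (T x))
  simp only [hO, pow_succ, mul_apply_eq_comp, Finset.sum_range_one, pow_zero,
    one_apply_eq_self] at hshift hT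
  rw [← hshift.unique hT]
  ring

end HardySpace

theorem stmt16
    {X U Y : Type*}
    [NormedAddCommGroup X] [InnerProductSpace ℂ X] [CompleteSpace X]
    [NormedAddCommGroup U] [InnerProductSpace ℂ U] [CompleteSpace U]
    [NormedAddCommGroup Y] [InnerProductSpace ℂ Y] [CompleteSpace Y]
    (T : X →L[ℂ] X) (E : X →L[ℂ] Y)
    -- `(E,T)` is output stable, with observability operator `O_{E,T}`
    (OET : X →L[ℂ] H2 Y) (hOET : ∀ (x : X) (n : ℕ), OET x n = E ((T ^ n) x))
    -- the Schur-class function `S`, with Taylor coefficients `S_j` and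
    -- (contractive) multiplication operator `M_S : H²_U → H²_Y`
    (S : ℂ → (U →L[ℂ] Y))
    (Scoef : ℕ → (U →L[ℂ] Y))
    (hScoef : ∀ z ∈ ball (0:ℂ) 1, ∀ u : U,
      HasSum (fun n : ℕ => z ^ n • Scoef n u) (S z u))
    (MS : H2 U →L[ℂ] H2 Y)
    (hMS : ∀ f : H2 U, ∀ z ∈ ball (0:ℂ) 1,
      hardyEval (MS f) z = S z (hardyEval f z))
    -- `N := Σ_j S_j* E T^j`
    (N : X →L[ℂ] U)
    (hN : ∀ x : X, HasSum (fun j : ℕ => adjoint (Scoef j) (E ((T ^ j) x))) (N x))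
    -- the de Branges–Rovnyak space `H(K_S)`, contractively included in `H²_Y` via `ι`
    -- with `ι ι^{[*]} = I − M_S M_S*`
    (HSp : Type*) [NormedAddCommGroup HSp] [InnerProductSpace ℂ HSp]
    [CompleteSpace HSp]
    (ι : HSp →L[ℂ] H2 Y) (hιinj : Function.Injective ι)
    (hι : ι ∘L adjoint ι = 1 - MS ∘L adjoint MS) :
    -- `M_{F^S} = (I − M_S M_S*) O_{E,T}` maps `X` into `H(K_S)` ...
    (∃ MF : X →L[ℂ] HSp, ι ∘L MF = (1 - MS ∘L adjoint MS) ∘L OET) ∧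
    -- ... and for the (unique) such `M_{F^S}`:
    (∀ MF : X →L[ℂ] HSp, ι ∘L MF = (1 - MS ∘L adjoint MS) ∘L OET →
      -- `(N,T)` is output stable and `P = O_{E,T}* O_{E,T} − O_{N,T}* O_{N,T}`
      (∃ ONT : X →L[ℂ] H2 U, (∀ (x : X) (n : ℕ), ONT x n = N ((T ^ n) x)) ∧
        adjoint MF ∘L MF = adjoint OET ∘L OET - adjoint ONT ∘L ONT) ∧
      -- the Stein equation for `P := M_{F^S}^{[*]} M_{F^S}`
      ((adjoint MF ∘L MF) - adjoint T ∘L (adjoint MF ∘L MF) ∘L T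
        = adjoint E ∘L E - adjoint N ∘L N) ∧
      -- `M_{F^S}^{[*]} = O_{E,T}*|_{H(K_S)}`: the interpolation condition
      -- `M_{F^S}^{[*]} f = x` coincides with `(E* f)^{∧L}(T*) = O_{E,T}* f = x`
      (adjoint MF = adjoint OET ∘L ι)) := by
  have hONT := adjoint_comp_observability_apply hOET hScoef hMS hN
  have hMF₀ : ι ∘L (adjoint ι ∘L OET) = (1 - MS ∘L adjoint MS) ∘L OET := by
    rw [← comp_assoc, hι]
  refine ⟨⟨_, hMF₀⟩, fun MF hMF => ?_⟩
  have hMF_eq : MF = adjoint ι ∘L OET :=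
    ext fun x => hιinj congr($(hMF.trans hMF₀.symm) x)
  have hadj : adjoint MF = adjoint OET ∘L ι := by
    rw [hMF_eq, adjoint_comp, adjoint_adjoint]
  have hP : adjoint MF ∘L MF = adjoint OET ∘L OET
      - adjoint (adjoint MS ∘L OET) ∘L (adjoint MS ∘L OET) := by
    rw [hadj, comp_assoc, hMF, sub_comp, comp_sub, one_def, id_comp, adjoint_comp, adjoint_adjoint]
    simp only [comp_assoc]
  refine ⟨⟨_, hONT, hP⟩, ?_, hadj⟩
  calc adjoint MF ∘L MF - adjoint T ∘L (adjoint MF ∘L MF) ∘L T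
      = (adjoint OET ∘L OET - adjoint T ∘L (adjoint OET ∘L OET) ∘L T)
        - (adjoint (adjoint MS ∘L OET) ∘L (adjoint MS ∘L OET)
          - adjoint T ∘L (adjoint (adjoint MS ∘L OET) ∘L (adjoint MS ∘L OET)) ∘L T) := by
        rw [hP, sub_comp, comp_sub]
        abel
    _ = adjoint E ∘L E - adjoint N ∘L N := by
        rw [observability_stein hOET, observability_stein hONT]

end
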